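/- arXiv:2104.05973 — 5 statements merged into one kernel-verified Lean document; each statement's English description precedes it below -/
import Mathlib

section
/- Let 1 ≤ p < ∞ and let h : ℝ → ℝ be a continuous function with h(0) > 0. Then there exist constants c > 0 and A > 0 such that for every real number a ≥ A one has ∫_ℝ |h(x)·cos(a·x)|^p dx ≥ c. -/
open MeasureTheory

/-- For 1 ≤ p < ∞ and h continuous with h(0) > 0, there are c > 0 and A > 0
such that ∫_ℝ |h(x)cos(ax)|^p dx ≥ c for all a ≥ A.  (The integral is the
Lebesgue integral, possibly infinite, hence formalized as a lower integral.) -/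
theorem oscillatory_lower_bound (p : ℝ) (hp : 1 ≤ p) (h : ℝ → ℝ)
    (hcont : Continuous h) (h0 : 0 < h 0) :
    ∃ c > (0 : ℝ), ∃ A > (0 : ℝ), ∀ a : ℝ, A ≤ a →
      ENNReal.ofReal c ≤ ∫⁻ x : ℝ, ENNReal.ofReal (|h x * Real.cos (a * x)| ^ p) := by
  obtain ⟨δ, hδpos, hδ⟩ :=
    Metric.continuousAt_iff.mp hcont.continuousAt (h 0 / 2) (by positivity)
  set ε : ℝ := δ / 2 with hεdef
  have hεpos : 0 < ε := by positivity
  have hh : ∀ x ∈ Set.Ioc (0:ℝ) ε, h 0 / 2 ≤ h x := by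
    intro x hx
    have hd : dist x 0 < δ := by
      rw [Real.dist_eq, sub_zero, abs_of_pos hx.1]
      have := hx.2; rw [hεdef] at this; linarith
    have h1 := hδ hd
    rw [Real.dist_eq] at h1
    have h2 := abs_lt.mp h1
    linarith [h2.1]
  have hppos : 0 ≤ p := le_trans zero_le_one hp
  refine ⟨(h 0 / 4) ^ p * (ε / 4), by positivity, 24 / ε, by positivity, ?_⟩
  intro a ha
  have hapos : 0 < a := lt_of_lt_of_le (by positivity) ha
  -- the good and bad sets
  set S : Set ℝ := Set.Ioc 0 ε ∩ {x | 1/2 ≤ |Real.cos (a * x)|} with hSdef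
  set T : Set ℝ := Set.Ioc 0 ε ∩ {x | |Real.cos (a * x)| < 1/2} with hTdef
  have hcosc : Continuous fun x : ℝ => |Real.cos (a * x)| :=
    (Real.continuous_cos.comp (continuous_const.mul continuous_id)).abs
  have hS : MeasurableSet S :=
    measurableSet_Ioc.inter (measurableSet_le measurable_const hcosc.measurable)
  have hT : MeasurableSet T :=
    measurableSet_Ioc.inter (measurableSet_lt hcosc.measurable measurable_const)
  -- the integral of sin(ax)^2 over (0, ε]
  have hsincont : Continuous fun x : ℝ => Real.sin (a * x) ^ 2 :=
    (Real.continuous_sin.comp (continuous_const.mul continuous_id)).pow 2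
  have hsinint : IntegrableOn (fun x : ℝ => Real.sin (a * x) ^ 2) (Set.Ioc 0 ε) :=
    hsincont.integrableOn_Ioc
  have hinv2 : a⁻¹ ≤ ε / 24 := by
    rw [inv_eq_one_div, div_le_div_iff₀ hapos (by norm_num)]
    have h24 : 24 ≤ a * ε := (div_le_iff₀ hεpos).mp ha
    nlinarith
  have hintval : ∫ x in Set.Ioc 0 ε, Real.sin (a * x) ^ 2 ≤ ε / 2 + ε / 48 := by
    rw [← intervalIntegral.integral_of_le hεpos.le]
    rw [intervalIntegral.integral_comp_mul_left (fun x => Real.sin x ^ 2) hapos.ne']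
    rw [integral_sin_sq]
    have h1 : |Real.sin (a * ε) * Real.cos (a * ε)| ≤ 1 := by
      rw [abs_mul]
      exact mul_le_one₀ (Real.abs_sin_le_one _) (abs_nonneg _) (Real.abs_cos_le_one _)
    have h2 := abs_le.mp h1
    simp only [smul_eq_mul, mul_zero, Real.sin_zero, Real.cos_zero]
    have hia : 0 < a⁻¹ := by positivity
    have hprod : a⁻¹ * a = 1 := inv_mul_cancel₀ hapos.ne'
    nlinarith [mul_nonneg hia.le (by linarith [h2.1] :
      (0:ℝ) ≤ Real.sin (a * ε) * Real.cos (a * ε) + 1)]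
  -- Markov: volume T ≤ 3ε/4
  have hvolT : volume T ≤ ENNReal.ofReal (3 * ε / 4) := by
    have step1 : ENNReal.ofReal (3/4) * volume T ≤ ∫⁻ x in T, ENNReal.ofReal (Real.sin (a * x) ^ 2) := by
      rw [← setLIntegral_const T (ENNReal.ofReal (3/4))]
      apply lintegral_mono_ae
      filter_upwards [ae_restrict_mem hT] with x hx
      apply ENNReal.ofReal_le_ofReal
      have hcos : |Real.cos (a * x)| < 1/2 := hx.2
      have : Real.cos (a * x) ^ 2 < 1/4 := by
        have := sq_abs (Real.cos (a * x))
        nlinarith [abs_nonneg (Real.cos (a * x))]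
      have hsq := Real.sin_sq_add_cos_sq (a * x)
      linarith
    have step2 : ∫⁻ x in T, ENNReal.ofReal (Real.sin (a * x) ^ 2)
        ≤ ∫⁻ x in Set.Ioc 0 ε, ENNReal.ofReal (Real.sin (a * x) ^ 2) :=
      lintegral_mono_set Set.inter_subset_left
    have step3 : ∫⁻ x in Set.Ioc 0 ε, ENNReal.ofReal (Real.sin (a * x) ^ 2)
        = ENNReal.ofReal (∫ x in Set.Ioc 0 ε, Real.sin (a * x) ^ 2) := by
      rw [ofReal_integral_eq_lintegral_ofReal hsinint (ae_of_all _ fun x => sq_nonneg _)]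
    have key : ENNReal.ofReal (3/4) * volume T ≤ ENNReal.ofReal (3/4) * ENNReal.ofReal (3 * ε / 4) := by
      calc ENNReal.ofReal (3/4) * volume T
          ≤ ENNReal.ofReal (∫ x in Set.Ioc 0 ε, Real.sin (a * x) ^ 2) := by
            rw [← step3]; exact le_trans step1 step2
        _ ≤ ENNReal.ofReal (ε / 2 + ε / 48) := ENNReal.ofReal_le_ofReal hintval
        _ ≤ ENNReal.ofReal (3/4) * ENNReal.ofReal (3 * ε / 4) := by
            rw [← ENNReal.ofReal_mul (by norm_num)]
            apply ENNReal.ofReal_le_ofReal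
            linarith
    exact (ENNReal.mul_le_mul_iff_right (by simp) (by simp)).mp key
  -- volume S ≥ ε/4
  have hvolS : ENNReal.ofReal (ε / 4) ≤ volume S := by
    have hunion : S ∪ T = Set.Ioc 0 ε := by
      rw [hSdef, hTdef, ← Set.inter_union_distrib_left]
      have : {x : ℝ | 1/2 ≤ |Real.cos (a * x)|} ∪ {x | |Real.cos (a * x)| < 1/2} = Set.univ := by
        ext x; simp [le_or_gt]
      rw [this, Set.inter_univ]
    have hdisj : Disjoint S T := by
      apply Set.disjoint_left.mpr
      rintro x ⟨_, hx1⟩ ⟨_, hx2⟩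
      simp only [Set.mem_setOf_eq] at hx1 hx2
      linarith
    have hmeas : volume S + volume T = ENNReal.ofReal ε := by
      rw [← measure_union hdisj hT, hunion, Real.volume_Ioc, sub_zero]
    have key : ENNReal.ofReal (ε / 4) + ENNReal.ofReal (3 * ε / 4) ≤ volume S + ENNReal.ofReal (3 * ε / 4) := by
      rw [← ENNReal.ofReal_add (by positivity) (by positivity)]
      have : ε / 4 + 3 * ε / 4 = ε := by ring
      rw [this, ← hmeas]
      exact add_le_add_right hvolT _
    exact (ENNReal.add_le_add_iff_right ENNReal.ofReal_ne_top).mp key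
  -- final chain
  have hpoint : ∀ x ∈ S, (h 0 / 4) ^ p ≤ |h x * Real.cos (a * x)| ^ p := by
    intro x hx
    apply Real.rpow_le_rpow (by positivity) _ hppos
    have hhx : h 0 / 2 ≤ h x := hh x hx.1
    have hcx : 1/2 ≤ |Real.cos (a * x)| := hx.2
    rw [abs_mul]
    have habs : h 0 / 2 ≤ |h x| := le_trans hhx (le_abs_self _)
    calc h 0 / 4 = (h 0 / 2) * (1/2) := by ring
      _ ≤ |h x| * |Real.cos (a * x)| := by
          apply mul_le_mul habs hcx (by norm_num) (abs_nonneg _)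
  calc ENNReal.ofReal ((h 0 / 4) ^ p * (ε / 4))
      = ENNReal.ofReal ((h 0 / 4) ^ p) * ENNReal.ofReal (ε / 4) := by
        rw [ENNReal.ofReal_mul (by positivity)]
    _ ≤ ENNReal.ofReal ((h 0 / 4) ^ p) * volume S :=
        mul_le_mul_right hvolS _
    _ = ∫⁻ x in S, ENNReal.ofReal ((h 0 / 4) ^ p) := (setLIntegral_const S _).symm
    _ ≤ ∫⁻ x in S, ENNReal.ofReal (|h x * Real.cos (a * x)| ^ p) := by
        apply lintegral_mono_ae
        filter_upwards [ae_restrict_mem hS] with x hx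
        exact ENNReal.ofReal_le_ofReal (hpoint x hx)
    _ ≤ ∫⁻ x : ℝ, ENNReal.ofReal (|h x * Real.cos (a * x)| ^ p) :=
        setLIntegral_le_lintegral _ _
end

section
/- Let 1 ≤ p < ∞, let σ > 0, and let φ : ℝ → ℝ be a bounded continuous function with φ ∈ L^{2p}(ℝ) and φ(0) ≠ 0. Then there exist a positive integer k₀, a positive integer N, and a constant c > 0 such that for all integers k ≥ k₀ and n > N, the function F(x) = 2·2^{−knσ}·φ²(x)·cos((17/12)·2^{kn}·x)·cos((17/12)·x) + 2·Σ_{i=1}^{n−1} 2^{−k(n+i)σ}·φ²(x)·cos((17/12)·2^{kn}·x)·cos((17/12)·2^{ki}·x) satisfies ‖F‖_{L^p(ℝ)} ≥ c·2^{−knσ}. -/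
open MeasureTheory
open scoped ENNReal NNReal

private lemma aux_geom (q : ℝ) (hq0 : 0 ≤ q) (hq : q ≤ 1/2) (m : ℕ) :
    ∑ i ∈ Finset.Icc 1 m, q ^ i ≤ 2 * q := by
  rw [← Finset.Ico_add_one_right_eq_Icc, Finset.sum_Ico_eq_sum_range]
  have h0 : ∑ i ∈ Finset.range (m + 1 - 1), q ^ (1 + i) = q * ∑ i ∈ Finset.range m, q ^ i := by
    simp [pow_add, Finset.mul_sum]
  rw [h0]
  have h1 : ∑ i ∈ Finset.range m, q ^ i ≤ 2 := by
    calc ∑ i ∈ Finset.range m, q ^ i ≤ ∑ i ∈ Finset.range m, (1/2:ℝ) ^ i :=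
          Finset.sum_le_sum fun i _ => pow_le_pow_left₀ hq0 hq i
      _ ≤ 2 := sum_geometric_two_le m
  calc q * ∑ i ∈ Finset.range m, q ^ i ≤ q * 2 := mul_le_mul_of_nonneg_left h1 hq0
    _ = 2 * q := mul_comm _ _

private lemma aux_cos (m : ℕ) (p : ℝ) (hp : 0 ≤ p) (hpm : p ≤ 2 * m) (t : ℝ) :
    (1 + m * Real.cos (2 * t)) / 2 ^ m ≤ |Real.cos t| ^ p := by
  have hc2 : Real.cos (2 * t) = 2 * Real.cos t ^ 2 - 1 := Real.cos_two_mul t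
  set c := Real.cos t with hc
  have h1 : (1:ℝ) + m * (2 * c ^ 2 - 1) ≤ (1 + (2 * c ^ 2 - 1)) ^ m := by
    apply one_add_mul_le_pow
    nlinarith [sq_nonneg c]
  have h2 : (1 + m * Real.cos (2*t)) / 2 ^ m ≤ ((1 + (2 * c ^ 2 - 1)) / 2) ^ m := by
    rw [div_pow, hc2]
    apply div_le_div_of_nonneg_right h1 (by positivity) |>.trans_eq
    norm_num
  have h3 : ((1 + (2 * c ^ 2 - 1)) / 2) ^ m = |c| ^ (2 * m) := by
    have : (1 + (2 * c ^ 2 - 1)) / 2 = |c| ^ 2 := by rw [sq_abs]; ring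
    rw [this, ← pow_mul]
  have h4 : |c| ^ (2 * m) = |c| ^ ((2 * m : ℕ) : ℝ) := (Real.rpow_natCast _ _).symm
  have h5 : |c| ^ ((2 * m : ℕ) : ℝ) ≤ |c| ^ p := by
    apply Real.rpow_le_rpow_of_exponent_ge' (abs_nonneg c) (Real.abs_cos_le_one t) hp
    push_cast; exact hpm
  calc (1 + m * Real.cos (2*t)) / 2 ^ m ≤ ((1 + (2 * c ^ 2 - 1)) / 2) ^ m := h2
    _ = |c| ^ (2*m) := h3
    _ ≤ |c| ^ p := h4 ▸ h5

private lemma aux_int (b r : ℝ) (hb : 0 < b) (m : ℝ) :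
    ∫ x in (-r)..r, (1 + m * Real.cos (b * x)) = 2 * r + 2 * m * Real.sin (b * r) / b := by
  have h1 : ∫ x in (-r)..r, Real.cos (b * x) = 2 * Real.sin (b * r) / b := by
    rw [intervalIntegral.integral_comp_mul_left Real.cos hb.ne']
    rw [integral_cos]
    rw [mul_neg, Real.sin_neg]
    field_simp
    ring_nf
    field_simp [hb.ne']
  have h2 : ∫ x in (-r)..r, (1 + m * Real.cos (b * x)) =
      (∫ x in (-r)..r, (1:ℝ)) + m * ∫ x in (-r)..r, Real.cos (b * x) := by
    have hcont : Continuous fun x => Real.cos (b * x) :=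
      Real.continuous_cos.comp (continuous_const.mul continuous_id)
    rw [intervalIntegral.integral_add intervalIntegrable_const
      ((hcont.intervalIntegrable _ _).const_mul m),
      intervalIntegral.integral_const_mul]
  rw [h2, h1]
  simp
  ring

set_option maxHeartbeats 2000000 in
/-- For 1 ≤ p < ∞, σ > 0, and φ bounded continuous with φ ∈ L^{2p} and φ(0) ≠ 0,
there exist positive integers k₀, N and c > 0 such that for all k ≥ k₀ and n > N,
the block F(x) = 2·2^{-knσ} φ²(x) cos((17/12)2^{kn}x) cos((17/12)x)
 + 2·Σ_{i=1}^{n-1} 2^{-k(n+i)σ} φ²(x) cos((17/12)2^{kn}x) cos((17/12)2^{ki}x)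
satisfies ‖F‖_{L^p} ≥ c·2^{-knσ}. -/
theorem block_lower_bound (p : ℝ) (hp : 1 ≤ p) (σ : ℝ) (hσ : 0 < σ) (φ : ℝ → ℝ)
    (hcont : Continuous φ) (hbdd : ∃ M : ℝ, ∀ x : ℝ, |φ x| ≤ M)
    (hφ : MemLp φ (ENNReal.ofReal (2 * p))) (h0 : φ 0 ≠ 0) :
    ∃ k₀ N : ℕ, 0 < k₀ ∧ 0 < N ∧ ∃ c > (0 : ℝ), ∀ k n : ℕ, k₀ ≤ k → N < n →
      ENNReal.ofReal (c * (2 : ℝ) ^ (-((k : ℝ) * (n : ℝ)) * σ)) ≤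
      eLpNorm (fun x : ℝ =>
          2 * (2 : ℝ) ^ (-((k : ℝ) * (n : ℝ)) * σ) * (φ x) ^ 2 *
            Real.cos ((17 / 12) * (2 : ℝ) ^ (k * n) * x) * Real.cos ((17 / 12) * x)
          + 2 * ∑ i ∈ Finset.Icc 1 (n - 1),
              (2 : ℝ) ^ (-((k : ℝ) * ((n : ℝ) + (i : ℝ))) * σ) * (φ x) ^ 2 *
                Real.cos ((17 / 12) * (2 : ℝ) ^ (k * n) * x) *
                Real.cos ((17 / 12) * (2 : ℝ) ^ (k * i) * x))
        (ENNReal.ofReal p) volume := by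
  have hp0 : (0:ℝ) < p := lt_of_lt_of_le one_pos hp
  have hφ0 : 0 < |φ 0| := abs_pos.mpr h0
  -- radius from continuity
  obtain ⟨r₁, hr₁pos, hr₁⟩ : ∃ r₁ > 0, ∀ x : ℝ, |x| ≤ r₁ → |φ 0| / 2 ≤ |φ x| := by
    have hca : ContinuousAt φ 0 := hcont.continuousAt
    rw [Metric.continuousAt_iff] at hca
    obtain ⟨d, hd, hd'⟩ := hca (|φ 0| / 2) (by positivity)
    refine ⟨d/2, by positivity, fun x hx => ?_⟩
    have h1 : dist x 0 < d := by rw [Real.dist_eq, sub_zero]; linarith [abs_nonneg x]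
    have h2 := hd' h1
    rw [Real.dist_eq] at h2
    have h3 := abs_sub_abs_le_abs_sub (φ 0) (φ x)
    rw [abs_sub_comm (φ 0) (φ x)] at h3
    linarith
  set r : ℝ := min r₁ (1/2) with hr_def
  have hrpos : 0 < r := lt_min hr₁pos (by norm_num)
  have hr_half : r ≤ 1/2 := min_le_right _ _
  have hr_r₁ : r ≤ r₁ := min_le_left _ _
  set δ : ℝ := (|φ 0| / 2) ^ 2 with hδ_def
  have hδpos : 0 < δ := by positivity
  set m : ℕ := ⌈p⌉₊ with hm_def
  have hm1 : 1 ≤ m := Nat.ceil_pos.mpr hp0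
  have hpm : p ≤ 2 * m := by
    have h1 := Nat.le_ceil p
    have h2 : (0:ℝ) ≤ (m:ℝ) := Nat.cast_nonneg m
    rw [hm_def]; push_cast at h1 ⊢; linarith
  obtain ⟨j₁, hj₁⟩ : ∃ j₁ : ℕ, (m:ℝ)/r < 2 ^ j₁ := pow_unbounded_of_one_lt _ one_lt_two
  set k₀ : ℕ := max (⌈4/σ⌉₊ + 1) (j₁ + 1) with hk₀_def
  set c : ℝ := δ * (r / 2 ^ m) ^ (1/p) with hc_def
  have hcpos : 0 < c := by positivity
  refine ⟨k₀, 1, lt_of_lt_of_le (Nat.succ_pos _) (le_max_left _ _), one_pos, c, hcpos, ?_⟩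
  intro k n hk hn
  set A : ℝ := (2:ℝ) ^ (-((k:ℝ) * (n:ℝ)) * σ) with hA_def
  have hApos : 0 < A := Real.rpow_pos_of_pos two_pos _
  set a : ℝ := 17 / 12 * (2:ℝ) ^ (k * n) with ha_def
  have hapos : 0 < a := by positivity
  set q : ℝ := (2:ℝ) ^ (-(k:ℝ) * σ) with hq_def
  have hqpos : 0 < q := Real.rpow_pos_of_pos two_pos _
  -- k bounds
  have hkk₀1 : (⌈4/σ⌉₊ + 1 : ℕ) ≤ k := le_trans (le_max_left _ _) hk
  have hkj : j₁ + 1 ≤ k := le_trans (le_max_right _ _) hk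
  have hkσ : 4 ≤ (k:ℝ) * σ := by
    have h1 : (4/σ : ℝ) ≤ (⌈4/σ⌉₊ : ℝ) := Nat.le_ceil _
    have h2 : ((⌈4/σ⌉₊ : ℕ) : ℝ) + 1 ≤ (k:ℝ) := by exact_mod_cast hkk₀1
    have h3 : 4/σ ≤ (k:ℝ) := by linarith
    calc (4:ℝ) = (4/σ) * σ := by field_simp
      _ ≤ (k:ℝ) * σ := mul_le_mul_of_nonneg_right h3 hσ.le
  have hq16 : q ≤ 1/16 := by
    have h1 : -(k:ℝ)*σ ≤ (-4:ℝ) := by linarith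
    have h2 : q ≤ (2:ℝ) ^ (-4:ℝ) := Real.rpow_le_rpow_of_exponent_le one_le_two h1
    have h3 : (2:ℝ) ^ (-4:ℝ) = 1/16 := by
      rw [show (-4:ℝ) = ((-4:ℤ):ℝ) by norm_num, Real.rpow_intCast]
      norm_num
    rw [h3] at h2
    linarith
  -- frequency bound : m/r ≤ a
  have ha_big : (m:ℝ) / r ≤ a := by
    have hkn : j₁ ≤ k * n := by
      have h1 : j₁ ≤ k := by omega
      have h2 : k ≤ k * n := Nat.le_mul_of_pos_right k (by omega)
      omega
    have h2 : (2:ℝ) ^ j₁ ≤ 2 ^ (k*n) := pow_le_pow_right₀ one_le_two hkn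
    have h3 : (2:ℝ) ^ (k*n) ≤ a := by
      rw [ha_def]
      nlinarith [pow_pos (show (0:ℝ) < 2 by norm_num) (k*n)]
    linarith
  have hma : (m:ℝ)/a ≤ r := by
    rw [div_le_iff₀ hapos]
    rw [div_le_iff₀ hrpos] at ha_big
    linarith
  -- the function g
  set g : ℝ → ℝ := fun x => 2 * Real.cos (17/12 * x) +
      2 * ∑ i ∈ Finset.Icc 1 (n-1), q ^ i * Real.cos (17/12 * (2:ℝ)^(k*i) * x) with hg_def
  clear_value g
  -- factorization
  have hterm : ∀ i : ℕ, (2:ℝ) ^ (-((k:ℝ) * ((n:ℝ) + (i:ℝ))) * σ) = A * q ^ i := by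
    intro i
    have h1 : q ^ i = (2:ℝ) ^ (-(k:ℝ)*σ * (i:ℝ)) := by
      rw [hq_def, ← Real.rpow_natCast ((2:ℝ) ^ (-(k:ℝ) * σ)) i,
        ← Real.rpow_mul (by norm_num : (0:ℝ) ≤ 2)]
    rw [h1, hA_def, ← Real.rpow_add two_pos]
    congr 1
    ring
  have hfact : (fun x : ℝ =>
      2 * A * φ x ^ 2 * Real.cos (a * x) * Real.cos (17/12 * x)
      + 2 * ∑ i ∈ Finset.Icc 1 (n-1),
          (2:ℝ) ^ (-((k:ℝ) * ((n:ℝ) + (i:ℝ))) * σ) * φ x ^ 2 * Real.cos (a * x) *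
            Real.cos (17/12 * (2:ℝ)^(k*i) * x))
      = fun x : ℝ => A * (φ x ^ 2 * Real.cos (a * x) * g x) := by
    funext x
    have hsum : ∑ i ∈ Finset.Icc 1 (n-1),
        (2:ℝ) ^ (-((k:ℝ) * ((n:ℝ) + (i:ℝ))) * σ) * φ x ^ 2 * Real.cos (a * x) *
          Real.cos (17/12 * (2:ℝ)^(k*i) * x)
        = A * φ x ^ 2 * Real.cos (a * x) *
            ∑ i ∈ Finset.Icc 1 (n-1), q ^ i * Real.cos (17/12 * (2:ℝ)^(k*i) * x) := by
      rw [Finset.mul_sum]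
      refine Finset.sum_congr rfl fun i _ => ?_
      rw [hterm i]; ring
    rw [hsum]
    simp only [hg_def]
    ring
  -- g lower bound on [-r,r]
  have hg1 : ∀ x ∈ Set.Icc (-r) r, 1 ≤ g x := by
    intro x hx
    obtain ⟨hx1, hx2⟩ := hx
    have hxabs : |x| ≤ r := abs_le.mpr ⟨hx1, hx2⟩
    have hcos : 5/8 ≤ Real.cos (17/12 * x) := by
      have h1 := Real.one_sub_sq_div_two_le_cos (x := 17/12 * x)
      have h2 : (17/12 * x)^2 ≤ (17/24:ℝ)^2 := sq_le_sq' (by linarith) (by linarith)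
      nlinarith [h1, h2]
    have hsum : |∑ i ∈ Finset.Icc 1 (n-1), q ^ i * Real.cos (17/12 * (2:ℝ)^(k*i) * x)| ≤ 2*q := by
      calc |∑ i ∈ Finset.Icc 1 (n-1), q ^ i * Real.cos (17/12 * (2:ℝ)^(k*i) * x)|
          ≤ ∑ i ∈ Finset.Icc 1 (n-1), |q ^ i * Real.cos (17/12 * (2:ℝ)^(k*i) * x)| :=
            Finset.abs_sum_le_sum_abs _ _
        _ ≤ ∑ i ∈ Finset.Icc 1 (n-1), q ^ i := by
            refine Finset.sum_le_sum fun i _ => ?_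
            rw [abs_mul, abs_pow, abs_of_pos hqpos]
            calc q^i * |Real.cos (17/12 * (2:ℝ)^(k*i) * x)| ≤ q^i * 1 :=
                  mul_le_mul_of_nonneg_left (Real.abs_cos_le_one _) (pow_nonneg hqpos.le i)
              _ = q^i := mul_one _
        _ ≤ 2*q := aux_geom q hqpos.le (by linarith) _
    have hs := abs_le.mp hsum
    simp only [hg_def]
    nlinarith [hs.1]
  -- φ² lower bound
  have hφx : ∀ x ∈ Set.Icc (-r) r, δ ≤ φ x ^ 2 := by
    intro x hx
    obtain ⟨hx1, hx2⟩ := hx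
    have hxabs : |x| ≤ r₁ := le_trans (abs_le.mpr ⟨hx1, hx2⟩) hr_r₁
    have h1 := hr₁ x hxabs
    calc δ = (|φ 0|/2)^2 := hδ_def
      _ ≤ |φ x|^2 := by nlinarith
      _ = φ x ^ 2 := sq_abs _
  -- pointwise |F| lower bound
  have hFlow : ∀ x ∈ Set.Icc (-r) r,
      A * δ * |Real.cos (a*x)| ≤ |A * (φ x ^ 2 * Real.cos (a*x) * g x)| := by
    intro x hx
    have h1 := hg1 x hx
    have h2 := hφx x hx
    have habs : |A * (φ x ^ 2 * Real.cos (a*x) * g x)|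
        = A * (φ x ^ 2 * |Real.cos (a*x)| * g x) := by
      rw [abs_mul, abs_mul, abs_mul, abs_of_pos hApos, abs_of_nonneg (sq_nonneg (φ x)),
        abs_of_nonneg (by linarith : (0:ℝ) ≤ g x)]
    rw [habs]
    have e1 : A * δ * |Real.cos (a*x)| ≤ A * (φ x ^ 2 * |Real.cos (a*x)|) := by
      rw [← mul_assoc]
      exact mul_le_mul_of_nonneg_right (mul_le_mul_of_nonneg_left h2 hApos.le) (abs_nonneg _)
    have e2 : A * (φ x ^ 2 * |Real.cos (a*x)|) ≤ A * (φ x ^ 2 * |Real.cos (a*x)| * g x) :=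
      mul_le_mul_of_nonneg_left (le_mul_of_one_le_right (by positivity) h1) hApos.le
    linarith
  -- pointwise p-power lower bound
  have hpow : ∀ x ∈ Set.Icc (-r) r,
      (A*δ)^p / 2^m * (1 + m * Real.cos (2*(a*x))) ≤ |A * (φ x ^ 2 * Real.cos (a*x) * g x)|^p := by
    intro x hx
    have h1 : (1 + m * Real.cos (2*(a*x))) / 2^m ≤ |Real.cos (a*x)|^p :=
      aux_cos m p (by linarith) hpm (a*x)
    calc (A*δ)^p / 2^m * (1 + m * Real.cos (2*(a*x)))
        = (A*δ)^p * ((1 + m * Real.cos (2*(a*x))) / 2^m) := by ring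
      _ ≤ (A*δ)^p * |Real.cos (a*x)|^p :=
          mul_le_mul_of_nonneg_left h1 (Real.rpow_nonneg (by positivity) p)
      _ = (A*δ*|Real.cos (a*x)|)^p := (Real.mul_rpow (by positivity) (abs_nonneg _)).symm
      _ ≤ |A * (φ x ^ 2 * Real.cos (a*x) * g x)|^p :=
          Real.rpow_le_rpow (by positivity) (hFlow x hx) (by linarith)
  -- continuity / integrability
  have hgc : Continuous g := by
    rw [hg_def]
    apply Continuous.add
    · exact continuous_const.mul (Real.continuous_cos.comp (continuous_const.mul continuous_id))
    · apply continuous_const.mul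
      apply continuous_finset_sum
      intro i _
      exact continuous_const.mul
        (Real.continuous_cos.comp ((continuous_const.mul continuous_id)))
  have hFc : Continuous fun x : ℝ => A * (φ x ^ 2 * Real.cos (a*x) * g x) := by
    apply continuous_const.mul
    exact (((hcont.pow 2).mul
      (Real.continuous_cos.comp (continuous_const.mul continuous_id))).mul hgc)
  have hFpc : Continuous fun x : ℝ => |A * (φ x ^ 2 * Real.cos (a*x) * g x)|^p :=
    hFc.abs.rpow_const fun x => Or.inr (by linarith)
  have hint1 : IntegrableOn (fun x : ℝ => |A * (φ x ^ 2 * Real.cos (a*x) * g x)|^p)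
      (Set.Icc (-r) r) volume := hFpc.integrableOn_Icc
  have hlowc : Continuous fun x : ℝ => (A*δ)^p / 2^m * (1 + m * Real.cos (2*(a*x))) := by
    apply continuous_const.mul
    exact continuous_const.add (continuous_const.mul
      (Real.continuous_cos.comp (continuous_const.mul (continuous_const.mul continuous_id))))
  have hint2 : IntegrableOn (fun x : ℝ => (A*δ)^p / 2^m * (1 + m * Real.cos (2*(a*x))))
      (Set.Icc (-r) r) volume := hlowc.integrableOn_Icc
  -- real integral lower bound
  have hreal : (c*A)^p ≤ ∫ x in Set.Icc (-r) r, |A * (φ x ^ 2 * Real.cos (a*x) * g x)|^p := by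
    have hmono := setIntegral_mono_on hint2 hint1 measurableSet_Icc hpow
    have hcalc : (∫ x in Set.Icc (-r) r, (A*δ)^p / 2^m * (1 + m * Real.cos (2*(a*x))))
        = (A*δ)^p / 2^m * (2*r + 2*m*Real.sin (2*a*r)/(2*a)) := by
      rw [MeasureTheory.integral_const_mul]
      congr 1
      rw [MeasureTheory.integral_Icc_eq_integral_Ioc,
        ← intervalIntegral.integral_of_le (by linarith : -r ≤ r)]
      have hcng : ∀ x : ℝ, Real.cos (2*(a*x)) = Real.cos (2*a*x) := fun x => by ring_nf
      simp_rw [hcng]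
      rw [aux_int (2*a) r (by positivity) m]
    have hsin : Real.sin (2*a*r) ≥ -1 := Real.neg_one_le_sin _
    have hlb : (A*δ)^p / 2^m * r ≤ (A*δ)^p / 2^m * (2*r + 2*m*Real.sin (2*a*r)/(2*a)) := by
      apply mul_le_mul_of_nonneg_left _ (by positivity)
      have hma' : (m:ℝ) ≤ r * a := by rw [div_le_iff₀ hapos] at hma; linarith
      have hlb' : -r ≤ 2*(m:ℝ)*Real.sin (2*a*r)/(2*a) := by
        rw [le_div_iff₀ (by positivity : (0:ℝ) < 2*a)]
        nlinarith [hsin, hma', (Nat.cast_nonneg m : (0:ℝ) ≤ (m:ℝ))]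
      linarith
    have hce : (c*A)^p = (A*δ)^p / 2^m * r := by
      have h1 : c*A = (A*δ) * (r/2^m)^(1/p) := by rw [hc_def]; ring
      rw [h1, Real.mul_rpow (by positivity) (by positivity)]
      have h2 : ((r/2^m)^(1/p:ℝ))^p = r/2^m := by
        rw [← Real.rpow_mul (by positivity), one_div, inv_mul_cancel₀ (ne_of_gt hp0),
          Real.rpow_one]
      rw [h2]; ring
    rw [hce]
    calc (A*δ)^p / 2^m * r ≤ (A*δ)^p / 2^m * (2*r + 2*m*Real.sin (2*a*r)/(2*a)) := hlb
      _ = ∫ x in Set.Icc (-r) r, (A*δ)^p / 2^m * (1 + m * Real.cos (2*(a*x))) := hcalc.symm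
      _ ≤ _ := hmono
  -- pass to ENNReal
  have hq0' : ENNReal.ofReal p ≠ 0 := by
    simp only [ne_eq, ENNReal.ofReal_eq_zero, not_le]
    exact hp0
  have hqt : ENNReal.ofReal p ≠ ⊤ := ENNReal.ofReal_ne_top
  rw [hfact, eLpNorm_eq_lintegral_rpow_enorm_toReal hq0' hqt, ENNReal.toReal_ofReal hp0.le]
  have key : ENNReal.ofReal ((c*A)^p)
      ≤ ∫⁻ x, (‖A * (φ x ^ 2 * Real.cos (a*x) * g x)‖₊ : ℝ≥0∞) ^ p := by
    calc ENNReal.ofReal ((c*A)^p)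
        ≤ ENNReal.ofReal (∫ x in Set.Icc (-r) r, |A * (φ x ^ 2 * Real.cos (a*x) * g x)|^p) :=
          ENNReal.ofReal_le_ofReal hreal
      _ = ∫⁻ x in Set.Icc (-r) r,
            ENNReal.ofReal (|A * (φ x ^ 2 * Real.cos (a*x) * g x)|^p) :=
          ofReal_integral_eq_lintegral_ofReal hint1
            (Filter.Eventually.of_forall fun x => Real.rpow_nonneg (abs_nonneg _) p)
      _ = ∫⁻ x in Set.Icc (-r) r, (‖A * (φ x ^ 2 * Real.cos (a*x) * g x)‖₊ : ℝ≥0∞) ^ p := by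
          refine lintegral_congr fun x => ?_
          rw [← ENNReal.ofReal_rpow_of_nonneg (abs_nonneg _) hp0.le]
          exact congrArg (· ^ p) (Real.enorm_eq_ofReal_abs _).symm
      _ ≤ ∫⁻ x, (‖A * (φ x ^ 2 * Real.cos (a*x) * g x)‖₊ : ℝ≥0∞) ^ p :=
          setLIntegral_le_lintegral _ _
  have hca : ((c*A)^p)^(1/p) = c*A := by
    rw [← Real.rpow_mul (by positivity), mul_one_div, div_self (ne_of_gt hp0), Real.rpow_one]
  calc ENNReal.ofReal (c*A) = (ENNReal.ofReal ((c*A)^p))^(1/p) := by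
        rw [ENNReal.ofReal_rpow_of_nonneg (by positivity) (by positivity), hca]
    _ ≤ (∫⁻ x, (‖A * (φ x ^ 2 * Real.cos (a*x) * g x)‖₊ : ℝ≥0∞) ^ p)^(1/p) :=
        ENNReal.rpow_le_rpow key (by positivity)
end

section
/- Let σ > 1/2 and define f : ℝ → ℝ by f(ξ) = (1 + |ξ|)^{−σ−1/2}, and set c(σ) = 4·(1 − 2^{−σ+1/2})/(2σ − 1). Then for every ξ ∈ ℝ the convolution satisfies (f ⋆ f)(ξ) = ∫_ℝ f(η)·f(ξ − η) dη ≥ c(σ)·(2 + |ξ|)^{−σ−1/2}. -/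
open MeasureTheory

/-- For σ > 1/2, f(ξ) = (1+|ξ|)^{-σ-1/2} and c(σ) = 4(1-2^{-σ+1/2})/(2σ-1),
the convolution satisfies (f⋆f)(ξ) ≥ c(σ)(2+|ξ|)^{-σ-1/2} for every ξ. -/
theorem convolution_lower_bound (σ : ℝ) (hσ : 1 / 2 < σ) (ξ : ℝ) :
    4 * (1 - (2 : ℝ) ^ (-σ + 1 / 2)) / (2 * σ - 1) * (2 + |ξ|) ^ (-σ - 1 / 2) ≤
      ∫ η : ℝ, (1 + |η|) ^ (-σ - 1 / 2) * (1 + |ξ - η|) ^ (-σ - 1 / 2) := by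
  set e : ℝ := -σ - 1/2 with he
  have he1 : e < -1 := by rw [he]; linarith
  -- continuity
  have hc1 : Continuous fun η : ℝ => (1 + |η|) ^ e :=
    (continuous_const.add continuous_abs).rpow_const (fun x => Or.inl (by have : (0:ℝ) < 1 + |x| := (by positivity); exact this.ne'))
  have hc2 : Continuous fun η : ℝ => (1 + |ξ - η|) ^ e :=
    (continuous_const.add (continuous_const.sub continuous_id).abs).rpow_const
      (fun x => Or.inl (by have : (0:ℝ) < 1 + |ξ - x| := (by positivity); exact this.ne'))
  -- integrability of the first factor
  have hint : Integrable fun η : ℝ => (1 + |η|) ^ e := by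
    have h : Integrable fun η : ℝ => (1 + ‖η‖) ^ (-(σ + 1/2)) :=
      integrable_one_add_norm (by simp; linarith)
    have h2 : -(σ + 1/2) = e := by rw [he]; ring
    rw [← h2]
    simpa [Real.norm_eq_abs] using h
  -- integrability of the product
  have hintmul : Integrable fun η : ℝ => (1 + |η|) ^ e * (1 + |ξ - η|) ^ e := by
    have := hint.bdd_mul (f := fun η : ℝ => (1 + |ξ - η|) ^ e)
      hc2.aestronglyMeasurable (c := 1) (ae_of_all _ fun x => by
        rw [Real.norm_eq_abs, abs_of_nonneg (Real.rpow_nonneg (by positivity) _)]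
        exact Real.rpow_le_one_of_one_le_of_nonpos (by simp [abs_nonneg]) (by linarith))
    exact this.congr (ae_of_all _ fun x => mul_comm _ _)
  -- restrict to Icc (-1) 1
  have hstep1 : (∫ η in Set.Icc (-1 : ℝ) 1, (1 + |η|) ^ e * (1 + |ξ - η|) ^ e) ≤
      ∫ η : ℝ, (1 + |η|) ^ e * (1 + |ξ - η|) ^ e :=
    setIntegral_le_integral hintmul (ae_of_all _ fun x => by positivity)
  -- pointwise bound on Icc
  have hstep2 : (∫ η in Set.Icc (-1 : ℝ) 1, (1 + |η|) ^ e * (2 + |ξ|) ^ e) ≤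
      ∫ η in Set.Icc (-1 : ℝ) 1, (1 + |η|) ^ e * (1 + |ξ - η|) ^ e := by
    refine setIntegral_mono_on ((hc1.mul continuous_const).integrableOn_Icc)
      ((hc1.mul hc2).integrableOn_Icc) measurableSet_Icc fun x hx => ?_
    refine mul_le_mul_of_nonneg_left ?_ (Real.rpow_nonneg (by positivity) _)
    refine Real.rpow_le_rpow_of_nonpos (by positivity) ?_ (by linarith)
    have : |ξ - x| ≤ |ξ| + |x| := abs_sub ξ x
    have hx1 : |x| ≤ 1 := abs_le.mpr ⟨hx.1, hx.2⟩
    linarith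
  -- compute the Icc integral
  have hval : (∫ η in Set.Icc (-1 : ℝ) 1, (1 + |η|) ^ e) =
      4 * (1 - (2 : ℝ) ^ (-σ + 1 / 2)) / (2 * σ - 1) := by
    have hIoc : (∫ η in Set.Icc (-1 : ℝ) 1, (1 + |η|) ^ e) =
        ∫ η in (-1 : ℝ)..1, (1 + |η|) ^ e := by
      rw [intervalIntegral.integral_of_le (by norm_num), integral_Icc_eq_integral_Ioc]
    have hii : ∀ a b : ℝ, IntervalIntegrable (fun η : ℝ => (1 + |η|) ^ e) volume a b :=
      fun a b => hc1.intervalIntegrable a b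
    have hsplit : (∫ η in (-1 : ℝ)..1, (1 + |η|) ^ e) =
        (∫ η in (-1 : ℝ)..0, (1 + |η|) ^ e) + ∫ η in (0 : ℝ)..1, (1 + |η|) ^ e :=
      (intervalIntegral.integral_add_adjacent_intervals (hii _ _) (hii _ _)).symm
    have hneg : (∫ η in (-1 : ℝ)..0, (1 + |η|) ^ e) = ∫ η in (0 : ℝ)..1, (1 + |η|) ^ e := by
      have := intervalIntegral.integral_comp_neg (fun η : ℝ => (1 + |η|) ^ e) (a := 0) (b := 1)
      simpa [abs_neg] using this.symm
    have hpos : (∫ η in (0 : ℝ)..1, (1 + |η|) ^ e) = ∫ η in (0 : ℝ)..1, (1 + η) ^ e := by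
      refine intervalIntegral.integral_congr fun x hx => ?_
      rw [Set.uIcc_of_le (by norm_num)] at hx
      rw [abs_of_nonneg hx.1]
    have hshift : (∫ η in (0 : ℝ)..1, (1 + η) ^ e) = ∫ u in (1 : ℝ)..2, u ^ e := by
      have := intervalIntegral.integral_comp_add_left (fun u : ℝ => u ^ e) (a := 0) (b := 1) (1 : ℝ)
      simpa [show (1:ℝ)+1 = 2 by norm_num] using this
    have hrpow : (∫ u in (1 : ℝ)..2, u ^ e) = ((2:ℝ) ^ (e + 1) - 1 ^ (e + 1)) / (e + 1) :=
      integral_rpow (Or.inr ⟨by linarith, by rw [Set.uIcc_of_le (by norm_num)]; norm_num⟩)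
    rw [hIoc, hsplit, hneg, hpos, hshift, hrpow]
    rw [Real.one_rpow]
    have h1 : e + 1 = -σ + 1/2 := by rw [he]; ring
    rw [h1]
    have h2 : -σ + 1/2 ≠ 0 := by linarith
    have h3 : 2 * σ - 1 ≠ 0 := by linarith
    rw [← add_div, div_eq_div_iff h2 h3]
    ring
  calc 4 * (1 - (2 : ℝ) ^ (-σ + 1 / 2)) / (2 * σ - 1) * (2 + |ξ|) ^ e
      = ∫ η in Set.Icc (-1 : ℝ) 1, (1 + |η|) ^ e * (2 + |ξ|) ^ e := by
        rw [MeasureTheory.integral_mul_const, hval]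
    _ ≤ ∫ η in Set.Icc (-1 : ℝ) 1, (1 + |η|) ^ e * (1 + |ξ - η|) ^ e := hstep2
    _ ≤ _ := hstep1
end

section
/- Let σ > 1/2 and define f : ℝ → ℝ by f(ξ) = (1 + |ξ|)^{−σ−1/2}, and set c(σ) = 4·(1 − 2^{−σ+1/2})/(2σ − 1). Then for every ξ ∈ ℝ the triple convolution satisfies (f ⋆ f ⋆ f)(ξ) ≥ c(σ)²·(3 + |ξ|)^{−σ−1/2}. -/
open MeasureTheory

section Aux

variable {σ : ℝ}

private lemma base_pos (x : ℝ) : (0:ℝ) < 1 + |x| := by positivity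

private lemma rpow_nonneg' (x : ℝ) : (0:ℝ) ≤ (1 + |x|) ^ (-σ - 1/2) :=
  Real.rpow_nonneg (base_pos x).le _

private lemma exp_nonpos (hσ : 1/2 < σ) : (-σ - 1/2 : ℝ) ≤ 0 := by linarith

private lemma rpow_le_one' (hσ : 1/2 < σ) {a x : ℝ} (ha : 1 ≤ a) :
    (a + |x|) ^ (-σ - 1/2) ≤ 1 :=
  Real.rpow_le_one_of_one_le_of_nonpos (by have := abs_nonneg x; linarith) (exp_nonpos hσ)

private lemma integrable_f (hσ : 1/2 < σ) :
    Integrable (fun x : ℝ => (1 + |x|) ^ (-σ - 1/2)) := by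
  have h : Integrable (fun x : ℝ => (1 + ‖x‖) ^ (-(σ + 1/2))) :=
    integrable_one_add_norm (by simp; linarith)
  rw [show (-(σ + 1/2) : ℝ) = -σ - 1/2 by ring] at h
  exact h

private lemma cont_f {a : ℝ} (ha : 1 ≤ a) :
    Continuous (fun x : ℝ => (a + |x|) ^ (-σ - 1/2)) := by
  apply (continuous_const.add continuous_abs).rpow_const
  intro x
  left
  have := abs_nonneg x
  exact (by linarith : (0:ℝ) < a + |x|).ne'

/-- Integrability of the product integrand. -/
private lemma integrable_prod (hσ : 1/2 < σ) {a : ℝ} (ha : 1 ≤ a) (x : ℝ) :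
    Integrable (fun ζ : ℝ => (1 + |ζ|) ^ (-σ - 1/2) * (a + |x - ζ|) ^ (-σ - 1/2)) := by
  refine (integrable_f hσ).mono' ?_ (Filter.Eventually.of_forall fun ζ => ?_)
  · exact ((cont_f (a := 1) le_rfl).mul
      ((cont_f ha).comp (continuous_const.sub continuous_id))).aestronglyMeasurable
  · rw [Real.norm_eq_abs, abs_of_nonneg (mul_nonneg (rpow_nonneg' ζ)
      (Real.rpow_nonneg (by have := abs_nonneg (x - ζ); linarith) _))]
    calc (1 + |ζ|) ^ (-σ - 1/2) * (a + |x - ζ|) ^ (-σ - 1/2)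
        ≤ (1 + |ζ|) ^ (-σ - 1/2) * 1 :=
          mul_le_mul_of_nonneg_left (rpow_le_one' hσ ha) (rpow_nonneg' ζ)
      _ = (1 + |ζ|) ^ (-σ - 1/2) := mul_one _

/-- The value of the integral of f over [-1,1]. -/
private lemma integral_Icc (hσ : 1/2 < σ) :
    ∫ t in Set.Icc (-1:ℝ) 1, (1 + |t|) ^ (-σ - 1/2)
      = 4 * (1 - (2:ℝ) ^ (-σ + 1/2)) / (2 * σ - 1) := by
  have hr : (-σ - 1/2 : ℝ) ≠ -1 := by intro h; linarith [hσ, (by linarith : σ ≠ 1/2)]; 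
  have hint : ∀ a b : ℝ, IntervalIntegrable (fun t : ℝ => (1 + |t|) ^ (-σ - 1/2)) volume a b :=
    fun a b => (cont_f (a := 1) le_rfl).intervalIntegrable a b
  have h01 : (∫ t in (0:ℝ)..1, (1 + |t|) ^ (-σ - 1/2))
      = ((2:ℝ) ^ (-σ - 1/2 + 1) - 1) / (-σ - 1/2 + 1) := by
    have h1 : (∫ t in (0:ℝ)..1, (1 + |t|) ^ (-σ - 1/2))
        = ∫ t in (0:ℝ)..1, (1 + t) ^ (-σ - 1/2) := by
      apply intervalIntegral.integral_congr
      intro t ht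
      rw [Set.uIcc_of_le (by norm_num : (0:ℝ) ≤ 1)] at ht
      dsimp only
      rw [abs_of_nonneg ht.1]
    rw [h1, intervalIntegral.integral_comp_add_left (fun t : ℝ => t ^ (-σ - 1/2)) 1,
      show (1:ℝ) + 0 = 1 by norm_num, show (1:ℝ) + 1 = 2 by norm_num]
    rw [integral_rpow (Or.inr ⟨hr, by
      rw [Set.uIcc_of_le (by norm_num : (1:ℝ) ≤ 2)]
      intro h; linarith [h.1, h.2]⟩)]
    rw [Real.one_rpow]
  have hneg : (∫ t in (-1:ℝ)..0, (1 + |t|) ^ (-σ - 1/2))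
      = ∫ t in (0:ℝ)..1, (1 + |t|) ^ (-σ - 1/2) := by
    have := intervalIntegral.integral_comp_neg (fun t : ℝ => (1 + |t|) ^ (-σ - 1/2))
      (a := 0) (b := 1)
    simp only [abs_neg, neg_zero, neg_neg] at this
    exact this.symm
  have hsplit : (∫ t in (-1:ℝ)..1, (1 + |t|) ^ (-σ - 1/2))
      = (∫ t in (-1:ℝ)..0, (1 + |t|) ^ (-σ - 1/2))
        + ∫ t in (0:ℝ)..1, (1 + |t|) ^ (-σ - 1/2) :=
    (intervalIntegral.integral_add_adjacent_intervals (hint _ _) (hint _ _)).symm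
  have hIcc : (∫ t in Set.Icc (-1:ℝ) 1, (1 + |t|) ^ (-σ - 1/2))
      = ∫ t in (-1:ℝ)..1, (1 + |t|) ^ (-σ - 1/2) := by
    rw [intervalIntegral.integral_of_le (by norm_num : (-1:ℝ) ≤ 1),
      MeasureTheory.integral_Icc_eq_integral_Ioc]
  rw [hIcc, hsplit, hneg, h01]
  rw [show (-σ - 1/2 + 1 : ℝ) = -σ + 1/2 by ring]
  have h1 : (-σ + 1/2 : ℝ) ≠ 0 := by intro h; linarith
  have h2 : (2 * σ - 1 : ℝ) ≠ 0 := by intro h; linarith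
  have h3 : (1 - σ * 2 : ℝ) ≠ 0 := by intro h; linarith
  have h4 : (-1 + σ * 2 : ℝ) ≠ 0 := by intro h; linarith
  generalize (2:ℝ) ^ (-σ + 1/2 : ℝ) = t
  rw [← add_div, div_eq_div_iff h1 h2]
  ring

private lemma c_nonneg (hσ : 1/2 < σ) :
    0 ≤ 4 * (1 - (2:ℝ) ^ (-σ + 1/2)) / (2 * σ - 1) := by
  apply div_nonneg _ (by linarith)
  have : (2:ℝ) ^ (-σ + 1/2 : ℝ) ≤ 1 :=
    Real.rpow_le_one_of_one_le_of_nonpos (by norm_num) (by linarith)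
  linarith

/-- Key convolution lower bound. -/
private lemma conv_lower (hσ : 1/2 < σ) {a : ℝ} (ha : 1 ≤ a) (x : ℝ) :
    4 * (1 - (2:ℝ) ^ (-σ + 1/2)) / (2 * σ - 1) * (a + 1 + |x|) ^ (-σ - 1/2)
      ≤ ∫ ζ : ℝ, (1 + |ζ|) ^ (-σ - 1/2) * (a + |x - ζ|) ^ (-σ - 1/2) := by
  set c := 4 * (1 - (2:ℝ) ^ (-σ + 1/2)) / (2 * σ - 1) with hc
  have hIf : Integrable (fun ζ : ℝ => (1 + |ζ|) ^ (-σ - 1/2) * (a + |x - ζ|) ^ (-σ - 1/2)) :=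
    integrable_prod hσ ha x
  have habs : ∀ ζ : ℝ, 0 ≤ a + |x - ζ| := fun ζ => by have := abs_nonneg (x - ζ); linarith
  calc c * (a + 1 + |x|) ^ (-σ - 1/2)
      = ∫ ζ in Set.Icc (-1:ℝ) 1, (1 + |ζ|) ^ (-σ - 1/2) * (a + 1 + |x|) ^ (-σ - 1/2) := by
        rw [MeasureTheory.integral_mul_const, integral_Icc hσ]
    _ ≤ ∫ ζ in Set.Icc (-1:ℝ) 1,
          (1 + |ζ|) ^ (-σ - 1/2) * (a + |x - ζ|) ^ (-σ - 1/2) := by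
        apply MeasureTheory.setIntegral_mono_on
        · exact ((integrable_f hσ).mul_const _).integrableOn
        · exact hIf.integrableOn
        · exact measurableSet_Icc
        · intro ζ hζ
          apply mul_le_mul_of_nonneg_left _ (rpow_nonneg' ζ)
          apply Real.rpow_le_rpow_of_nonpos
          · have := abs_nonneg (x - ζ); linarith
          · have h1 : |x - ζ| ≤ |x| + |ζ| := abs_sub x ζ
            have h2 : |ζ| ≤ 1 := abs_le.mpr ⟨hζ.1, hζ.2⟩
            linarith
          · exact exp_nonpos hσ
    _ ≤ ∫ ζ : ℝ, (1 + |ζ|) ^ (-σ - 1/2) * (a + |x - ζ|) ^ (-σ - 1/2) := by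
        apply MeasureTheory.setIntegral_le_integral hIf
        exact Filter.Eventually.of_forall fun ζ =>
          mul_nonneg (rpow_nonneg' ζ) (Real.rpow_nonneg (habs ζ) _)

end Aux

/-- For σ > 1/2, f(ξ) = (1+|ξ|)^{-σ-1/2} and c(σ) = 4(1-2^{-σ+1/2})/(2σ-1),
the triple convolution (f⋆f⋆f)(ξ) = ∫ f(η)·(f⋆f)(ξ-η) dη satisfies
(f⋆f⋆f)(ξ) ≥ c(σ)²(3+|ξ|)^{-σ-1/2} for every ξ. -/
theorem triple_convolution_lower_bound (σ : ℝ) (hσ : 1 / 2 < σ) (ξ : ℝ) :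
    (4 * (1 - (2 : ℝ) ^ (-σ + 1 / 2)) / (2 * σ - 1)) ^ 2 * (3 + |ξ|) ^ (-σ - 1 / 2) ≤
      ∫ η : ℝ, (1 + |η|) ^ (-σ - 1 / 2) *
        ∫ ζ : ℝ, (1 + |ζ|) ^ (-σ - 1 / 2) * (1 + |ξ - η - ζ|) ^ (-σ - 1 / 2) := by
  set c := 4 * (1 - (2:ℝ) ^ (-σ + 1/2)) / (2 * σ - 1) with hc
  have hcn := c_nonneg hσ
  set G := fun η : ℝ => ∫ ζ : ℝ, (1 + |ζ|) ^ (-σ - 1/2) * (1 + |ξ - η - ζ|) ^ (-σ - 1/2)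
    with hG
  -- Inner bound: G η ≥ c * (2 + |ξ - η|)^(-σ-1/2)
  have hinner : ∀ η : ℝ, c * (2 + |ξ - η|) ^ (-σ - 1/2) ≤ G η := by
    intro η
    have h := conv_lower hσ (le_refl 1) (x := ξ - η)
    rw [show (1:ℝ) + 1 = 2 by norm_num] at h
    exact h
  -- G is bounded above by ∫ f
  have hGle : ∀ η : ℝ, G η ≤ ∫ ζ : ℝ, (1 + |ζ|) ^ (-σ - 1/2) := by
    intro η
    apply MeasureTheory.integral_mono (integrable_prod hσ (le_refl 1) (ξ - η))
      (integrable_f hσ)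
    intro ζ
    calc (1 + |ζ|) ^ (-σ - 1/2) * (1 + |ξ - η - ζ|) ^ (-σ - 1/2)
        ≤ (1 + |ζ|) ^ (-σ - 1/2) * 1 :=
          mul_le_mul_of_nonneg_left (rpow_le_one' hσ le_rfl) (rpow_nonneg' ζ)
      _ = (1 + |ζ|) ^ (-σ - 1/2) := mul_one _
  have hGnonneg : ∀ η : ℝ, 0 ≤ G η := fun η => MeasureTheory.integral_nonneg fun ζ =>
    mul_nonneg (rpow_nonneg' ζ) (rpow_nonneg' _)
  -- measurability of G
  have hGm : AEStronglyMeasurable G (volume : Measure ℝ) := by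
    have hcont : Continuous (fun p : ℝ × ℝ =>
        (1 + |p.2|) ^ (-σ - 1/2) * (1 + |ξ - p.1 - p.2|) ^ (-σ - 1/2)) := by
      apply Continuous.mul
      · exact (cont_f (a := 1) le_rfl).comp continuous_snd
      · exact (cont_f (a := 1) le_rfl).comp ((continuous_const.sub continuous_fst).sub
          continuous_snd)
    exact (hcont.aestronglyMeasurable (μ := (volume : Measure ℝ).prod volume)).integral_prod_right'
  -- integrability of outer integrand
  have houter : Integrable (fun η : ℝ => (1 + |η|) ^ (-σ - 1/2) * G η) := by
    refine ((integrable_f hσ).mul_const (∫ ζ : ℝ, (1 + |ζ|) ^ (-σ - 1/2))).mono'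
      (((cont_f (a := 1) le_rfl).aestronglyMeasurable).mul hGm)
      (Filter.Eventually.of_forall fun η => ?_)
    rw [Real.norm_eq_abs, abs_of_nonneg (mul_nonneg (rpow_nonneg' η) (hGnonneg η))]
    exact mul_le_mul_of_nonneg_left (hGle η) (rpow_nonneg' η)
  -- lower function
  have hlow : ∀ η : ℝ, (1 + |η|) ^ (-σ - 1/2) * (c * (2 + |ξ - η|) ^ (-σ - 1/2))
      ≤ (1 + |η|) ^ (-σ - 1/2) * G η := fun η =>
    mul_le_mul_of_nonneg_left (hinner η) (rpow_nonneg' η)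
  have hstep : (∫ η : ℝ, (1 + |η|) ^ (-σ - 1/2) * (c * (2 + |ξ - η|) ^ (-σ - 1/2)))
      ≤ ∫ η : ℝ, (1 + |η|) ^ (-σ - 1/2) * G η := by
    apply MeasureTheory.integral_mono_of_nonneg
      (Filter.Eventually.of_forall fun η => mul_nonneg (rpow_nonneg' η)
        (mul_nonneg hcn (Real.rpow_nonneg (by have := abs_nonneg (ξ - η); linarith) _)))
      houter (Filter.Eventually.of_forall hlow)
  have hmid : (∫ η : ℝ, (1 + |η|) ^ (-σ - 1/2) * (c * (2 + |ξ - η|) ^ (-σ - 1/2)))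
      = c * ∫ η : ℝ, (1 + |η|) ^ (-σ - 1/2) * (2 + |ξ - η|) ^ (-σ - 1/2) := by
    rw [← MeasureTheory.integral_const_mul]
    congr 1 with η
    ring
  have hfinal : c * (c * (3 + |ξ|) ^ (-σ - 1/2))
      ≤ c * ∫ η : ℝ, (1 + |η|) ^ (-σ - 1/2) * (2 + |ξ - η|) ^ (-σ - 1/2) := by
    apply mul_le_mul_of_nonneg_left _ hcn
    have h := conv_lower hσ (by norm_num : (1:ℝ) ≤ 2) (x := ξ)
    rw [show (2:ℝ) + 1 = 3 by norm_num] at h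
    exact h
  calc c ^ 2 * (3 + |ξ|) ^ (-σ - 1/2) = c * (c * (3 + |ξ|) ^ (-σ - 1/2)) := by ring
    _ ≤ c * ∫ η : ℝ, (1 + |η|) ^ (-σ - 1/2) * (2 + |ξ - η|) ^ (-σ - 1/2) := hfinal
    _ = ∫ η : ℝ, (1 + |η|) ^ (-σ - 1/2) * (c * (2 + |ξ - η|) ^ (-σ - 1/2)) := hmid.symm
    _ ≤ ∫ η : ℝ, (1 + |η|) ^ (-σ - 1/2) * G η := hstep
end

section
/- Let σ > 1/2, define f : ℝ → ℝ by f(ξ) = (1 + |ξ|)^{−σ−1/2}, and let g = f ⋆ f ⋆ f be the triple convolution. Then there exists a constant c > 0, depending only on σ, such that for every integer j ≥ 2, ∫_{(4/3)·2^j ≤ |ξ| ≤ (3/2)·2^j} g(ξ)² dξ ≥ c·2^{−2σj}. -/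
open MeasureTheory

namespace TCB

noncomputable def h (p x : ℝ) : ℝ := (1 + |x|) ^ (-p)
noncomputable def I (p x : ℝ) : ℝ := ∫ ζ : ℝ, h p ζ * h p (x - ζ)
noncomputable def A (p : ℝ) : ℝ := ∫ x : ℝ, h p x
noncomputable def g (p ξ : ℝ) : ℝ := ∫ η : ℝ, h p η * I p (ξ - η)

variable {p : ℝ}

lemma h_pos (p x : ℝ) : 0 < h p x := Real.rpow_pos_of_pos (by positivity) _

lemma h_le_one (hp : 0 < p) (x : ℝ) : h p x ≤ 1 :=
  Real.rpow_le_one_of_one_le_of_nonpos (by simp [abs_nonneg]) (by linarith)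

lemma h_cont (p : ℝ) : Continuous (h p) :=
  (continuous_const.add continuous_abs).rpow_const (fun x => Or.inl (by positivity : (1:ℝ) + |x| ≠ 0))

lemma h_int (hp : 1 < p) : Integrable (h p) := by
  have := integrable_one_add_norm (E := ℝ) (μ := volume) (r := p) (by simpa using hp)
  simp [Real.norm_eq_abs] at this; exact this

lemma h_ge {x b : ℝ} (hp : 0 < p) (hb : |x| ≤ b) : (1 + b) ^ (-p) ≤ h p x :=
  Real.rpow_le_rpow_of_nonpos (by positivity) (by linarith) (by linarith)

lemma key1 (hp : 0 < p) {t : ℝ} (x : ℝ) (ht : |t| ≤ 1) :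
    2 ^ (-p) * h p x ≤ h p (x - t) := by
  have h1 : 1 + |x - t| ≤ 2 * (1 + |x|) := by
    have h2 : |x - t| ≤ |x| + |t| := abs_sub x t
    have := abs_nonneg x
    linarith
  have h3 : h p (x - t) ≥ (2 * (1 + |x|)) ^ (-p) :=
    Real.rpow_le_rpow_of_nonpos (by positivity) h1 (by linarith)
  calc 2 ^ (-p) * h p x = (2 * (1 + |x|)) ^ (-p) := by
        rw [Real.mul_rpow (by norm_num) (by positivity)]; rfl
    _ ≤ h p (x - t) := h3

lemma I_integrand_int (hp : 1 < p) (x : ℝ) : Integrable (fun ζ => h p ζ * h p (x - ζ)) := by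
  refine (h_int hp).mono' ?_ (Filter.Eventually.of_forall fun ζ => ?_)
  · exact ((h_cont p).mul ((h_cont p).comp (continuous_const.sub continuous_id))).aestronglyMeasurable
  · rw [Real.norm_eq_abs, abs_of_nonneg (mul_nonneg (h_pos p _).le (h_pos p _).le)]
    calc h p ζ * h p (x - ζ) ≤ h p ζ * 1 :=
          mul_le_mul_of_nonneg_left (h_le_one (by linarith) _) (h_pos p ζ).le
      _ = h p ζ := mul_one _

lemma I_nonneg (p x : ℝ) : 0 ≤ I p x :=
  integral_nonneg fun _ => mul_nonneg (h_pos p _).le (h_pos p _).le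

lemma I_le (hp : 1 < p) (x : ℝ) : I p x ≤ A p := by
  refine integral_mono (I_integrand_int hp x) (h_int hp) fun ζ => ?_
  calc h p ζ * h p (x - ζ) ≤ h p ζ * 1 :=
        mul_le_mul_of_nonneg_left (h_le_one (by linarith) _) (h_pos p ζ).le
    _ = h p ζ := mul_one _

lemma I_meas (p : ℝ) : StronglyMeasurable (I p) := by
  have : Continuous fun q : ℝ × ℝ => h p q.2 * h p (q.1 - q.2) :=
    ((h_cont p).comp continuous_snd).mul ((h_cont p).comp (continuous_fst.sub continuous_snd))
  exact this.stronglyMeasurable.integral_prod_right'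

lemma I_lb (hp : 1 < p) (x : ℝ) : 2 ^ (1 - 2 * p) * h p x ≤ I p x := by
  have hp0 : (0:ℝ) < p := by linarith
  have hsub : ∀ ζ ∈ Set.Icc (-1 : ℝ) 1, 2 ^ (-p) * (2 ^ (-p) * h p x) ≤ h p ζ * h p (x - ζ) := by
    intro ζ hζ
    have hζ1 : |ζ| ≤ 1 := abs_le.2 hζ
    have h1 : (2:ℝ) ^ (-p) ≤ h p ζ := by
      have := h_ge (x := ζ) (b := 1) hp0 hζ1
      norm_num at this; exact this
    exact mul_le_mul h1 (key1 hp0 x hζ1)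
      (mul_nonneg (by positivity) (h_pos p x).le) (h_pos p ζ).le
  have hset : 2 ^ (-p) * (2 ^ (-p) * h p x) * (volume (Set.Icc (-1:ℝ) 1)).toReal
      ≤ ∫ ζ in Set.Icc (-1:ℝ) 1, h p ζ * h p (x - ζ) :=
    setIntegral_ge_of_const_le_real measurableSet_Icc (by simp) hsub
      (I_integrand_int hp x).integrableOn
  have hvol : (volume (Set.Icc (-1:ℝ) 1)).toReal = 2 := by
    rw [Real.volume_Icc]; norm_num
  have hle : ∫ ζ in Set.Icc (-1:ℝ) 1, h p ζ * h p (x - ζ) ≤ I p x :=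
    setIntegral_le_integral (I_integrand_int hp x)
      (Filter.Eventually.of_forall fun _ => mul_nonneg (h_pos p _).le (h_pos p _).le)
  rw [hvol] at hset
  calc 2 ^ (1 - 2 * p) * h p x = 2 ^ (-p) * (2 ^ (-p) * h p x) * 2 := by
        rw [show (1 : ℝ) - 2 * p = -p + -p + 1 by ring, Real.rpow_add two_pos,
          Real.rpow_add two_pos, Real.rpow_one]; ring
    _ ≤ ∫ ζ in Set.Icc (-1:ℝ) 1, h p ζ * h p (x - ζ) := hset
    _ ≤ I p x := hle

lemma g_integrand_int (hp : 1 < p) (ξ : ℝ) : Integrable (fun η => h p η * I p (ξ - η)) := by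
  refine ((h_int hp).mul_const (A p)).mono' ?_ (Filter.Eventually.of_forall fun η => ?_)
  · exact (h_cont p).aestronglyMeasurable.mul
      (((I_meas p).comp_measurable (measurable_const.sub measurable_id)).aestronglyMeasurable)
  · rw [Real.norm_eq_abs, abs_of_nonneg (mul_nonneg (h_pos p _).le (I_nonneg p _))]
    exact mul_le_mul_of_nonneg_left (I_le hp _) (h_pos p η).le

lemma g_nonneg (p ξ : ℝ) : 0 ≤ g p ξ :=
  integral_nonneg fun _ => mul_nonneg (h_pos p _).le (I_nonneg p _)

lemma g_le (hp : 1 < p) (ξ : ℝ) : g p ξ ≤ A p * A p := by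
  have h1 : g p ξ ≤ ∫ η : ℝ, h p η * A p :=
    integral_mono (g_integrand_int hp ξ) ((h_int hp).mul_const _)
      (fun η => mul_le_mul_of_nonneg_left (I_le hp _) (h_pos p η).le)
  rwa [integral_mul_const] at h1

lemma g_meas (p : ℝ) : StronglyMeasurable (g p) := by
  have hsm : StronglyMeasurable fun q : ℝ × ℝ => h p q.2 * I p (q.1 - q.2) :=
    ((h_cont p).comp continuous_snd).stronglyMeasurable.mul
      ((I_meas p).comp_measurable (measurable_fst.sub measurable_snd))
  exact hsm.integral_prod_right'

lemma g_lb (hp : 1 < p) (ξ : ℝ) : 2 ^ (2 - 4 * p) * h p ξ ≤ g p ξ := by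
  have hp0 : (0:ℝ) < p := by linarith
  have hsub : ∀ η ∈ Set.Icc (-1 : ℝ) 1,
      2 ^ (-p) * (2 ^ (1 - 2 * p) * (2 ^ (-p) * h p ξ)) ≤ h p η * I p (ξ - η) := by
    intro η hη
    have hη1 : |η| ≤ 1 := abs_le.2 hη
    have h1 : (2:ℝ) ^ (-p) ≤ h p η := by
      have := h_ge (x := η) (b := 1) hp0 hη1
      norm_num at this; exact this
    have h2 : 2 ^ (1 - 2 * p) * (2 ^ (-p) * h p ξ) ≤ I p (ξ - η) :=
      le_trans (mul_le_mul_of_nonneg_left (key1 hp0 ξ hη1) (by positivity)) (I_lb hp (ξ - η))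
    exact mul_le_mul h1 h2
      (by have := h_pos p ξ; positivity) (h_pos p η).le
  have hset : 2 ^ (-p) * (2 ^ (1 - 2 * p) * (2 ^ (-p) * h p ξ)) *
        (volume (Set.Icc (-1:ℝ) 1)).toReal
      ≤ ∫ η in Set.Icc (-1:ℝ) 1, h p η * I p (ξ - η) :=
    setIntegral_ge_of_const_le_real measurableSet_Icc (by simp) hsub
      (g_integrand_int hp ξ).integrableOn
  have hvol : (volume (Set.Icc (-1:ℝ) 1)).toReal = 2 := by
    rw [Real.volume_Icc]; norm_num
  have hle : ∫ η in Set.Icc (-1:ℝ) 1, h p η * I p (ξ - η) ≤ g p ξ :=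
    setIntegral_le_integral (g_integrand_int hp ξ)
      (Filter.Eventually.of_forall fun _ => mul_nonneg (h_pos p _).le (I_nonneg p _))
  rw [hvol] at hset
  calc 2 ^ (2 - 4 * p) * h p ξ
      = 2 ^ (-p) * (2 ^ (1 - 2 * p) * (2 ^ (-p) * h p ξ)) * 2 := by
        rw [show (2 : ℝ) - 4 * p = -p + ((1 - 2 * p) + -p) + 1 by ring,
          Real.rpow_add two_pos, Real.rpow_add two_pos, Real.rpow_add two_pos,
          Real.rpow_one]; ring
    _ ≤ ∫ η in Set.Icc (-1:ℝ) 1, h p η * I p (ξ - η) := hset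
    _ ≤ g p ξ := hle

end TCB

/-- For σ > 1/2, f(ξ) = (1+|ξ|)^{-σ-1/2} and g = f⋆f⋆f, there is c > 0
(depending only on σ) such that for every integer j ≥ 2,
∫_{(4/3)2^j ≤ |ξ| ≤ (3/2)2^j} g(ξ)² dξ ≥ c·2^{-2σj}. -/
theorem triple_convolution_block_lower_bound (σ : ℝ) (hσ : 1 / 2 < σ) :
    ∃ c > (0 : ℝ), ∀ j : ℕ, 2 ≤ j →
      c * (2 : ℝ) ^ (-(2 * σ) * (j : ℝ)) ≤
        ∫ ξ in {ξ : ℝ | (4 / 3) * 2 ^ j ≤ |ξ| ∧ |ξ| ≤ (3 / 2) * 2 ^ j},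
          (∫ η : ℝ, (1 + |η|) ^ (-σ - 1 / 2) *
            ∫ ζ : ℝ, (1 + |ζ|) ^ (-σ - 1 / 2) * (1 + |ξ - η - ζ|) ^ (-σ - 1 / 2)) ^ 2 := by
  set p : ℝ := σ + 1 / 2 with hpdef
  have hp : 1 < p := by rw [hpdef]; linarith
  have hp0 : (0:ℝ) < p := by linarith
  refine ⟨2 ^ (4 - 10 * p) / 6, by positivity, fun j hj => ?_⟩
  have hexp : -σ - 1 / 2 = -p := by rw [hpdef]; ring_nf
  rw [show (fun ξ : ℝ =>
      (∫ η : ℝ, (1 + |η|) ^ (-σ - 1 / 2) *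
        ∫ ζ : ℝ, (1 + |ζ|) ^ (-σ - 1 / 2) * (1 + |ξ - η - ζ|) ^ (-σ - 1 / 2)) ^ 2)
      = fun ξ : ℝ => (TCB.g p ξ) ^ 2 by rw [hexp]; rfl]
  set a : ℝ := (4 / 3) * 2 ^ j with hadef
  set b : ℝ := (3 / 2) * 2 ^ j with hbdef
  set S : Set ℝ := {ξ : ℝ | a ≤ |ξ| ∧ |ξ| ≤ b} with hSdef
  have h2j : (1:ℝ) ≤ 2 ^ j := one_le_pow₀ (by norm_num)
  have ha0 : (0:ℝ) < a := by rw [hadef]; positivity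
  have hab : a ≤ b := by rw [hadef, hbdef]; nlinarith
  have hIccS : Set.Icc a b ⊆ S := by
    intro ξ hξ
    have h1 : 0 ≤ ξ := le_trans ha0.le hξ.1
    constructor <;> rw [abs_of_nonneg h1]
    · exact hξ.1
    · exact hξ.2
  have hSIcc : S ⊆ Set.Icc (-b) b := fun ξ hξ => abs_le.1 hξ.2
  have hSfin : volume S ≠ ⊤ :=
    ((measure_mono hSIcc).trans_lt measure_Icc_lt_top).ne
  have hgint : IntegrableOn (fun ξ => (TCB.g p ξ) ^ 2) S := by
    refine Integrable.mono' (g := fun _ => (TCB.A p * TCB.A p) ^ 2)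
      (integrableOn_const hSfin) ?_
      (Filter.Eventually.of_forall fun ξ => ?_)
    · exact ((TCB.g_meas p).pow 2).aestronglyMeasurable
    · rw [Real.norm_eq_abs, abs_of_nonneg (by positivity)]
      exact pow_le_pow_left₀ (TCB.g_nonneg p ξ) (TCB.g_le hp ξ) 2
  -- lower bound constant on Icc a b
  have hglb : ∀ ξ ∈ Set.Icc a b,
      (2 ^ (2 - 4 * p) * (1 + b) ^ (-p)) ^ 2 ≤ (TCB.g p ξ) ^ 2 := by
    intro ξ hξ
    have hξb : |ξ| ≤ b := (hIccS hξ).2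
    have h1 : 2 ^ (2 - 4 * p) * (1 + b) ^ (-p) ≤ TCB.g p ξ :=
      le_trans (mul_le_mul_of_nonneg_left (TCB.h_ge hp0 hξb) (by positivity))
        (TCB.g_lb hp ξ)
    exact pow_le_pow_left₀ (by positivity) h1 2
  have hset : (2 ^ (2 - 4 * p) * (1 + b) ^ (-p)) ^ 2 * (volume (Set.Icc a b)).toReal
      ≤ ∫ ξ in Set.Icc a b, (TCB.g p ξ) ^ 2 :=
    setIntegral_ge_of_const_le_real measurableSet_Icc
      (by simp) hglb (hgint.mono_set hIccS)
  have hmono : ∫ ξ in Set.Icc a b, (TCB.g p ξ) ^ 2 ≤ ∫ ξ in S, (TCB.g p ξ) ^ 2 :=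
    setIntegral_mono_set hgint
      (Filter.Eventually.of_forall fun ξ => by positivity)
      (HasSubset.Subset.eventuallyLE hIccS)
  have hvol : (volume (Set.Icc a b)).toReal = 2 ^ (j:ℝ) / 6 := by
    rw [Real.volume_Icc, ENNReal.toReal_ofReal (by linarith)]
    rw [hadef, hbdef, ← Real.rpow_natCast 2 j]; ring
  -- arithmetic
  have h1b : (1 + b) ^ (-p) ≥ (2:ℝ) ^ (-((j:ℝ) + 1) * p) := by
    have hb2 : 1 + b ≤ 2 ^ ((j:ℝ) + 1) := by
      rw [Real.rpow_add two_pos, Real.rpow_natCast, Real.rpow_one, hbdef]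
      have : (2:ℝ) ≤ 2 ^ j := by
        calc (2:ℝ) = 2 ^ 1 := (pow_one 2).symm
        _ ≤ 2 ^ j := pow_le_pow_right₀ (by norm_num) (by omega)
      nlinarith
    calc (2:ℝ) ^ (-((j:ℝ) + 1) * p) = (2 ^ ((j:ℝ) + 1)) ^ (-p) := by
          rw [← Real.rpow_mul (by norm_num : (0:ℝ) ≤ 2)]; ring_nf
    _ ≤ (1 + b) ^ (-p) :=
          Real.rpow_le_rpow_of_nonpos (by positivity) hb2 (by linarith)
  have e1 : ((2:ℝ) ^ (2 - 4 * p) * 2 ^ (-((j:ℝ) + 1) * p)) ^ 2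
      = 2 ^ ((2 - 4 * p) * 2 + (-((j:ℝ) + 1) * p) * 2) := by
    rw [mul_pow, ← Real.rpow_natCast ((2:ℝ) ^ ((2:ℝ) - 4 * p)) 2,
      ← Real.rpow_natCast ((2:ℝ) ^ (-((j:ℝ) + 1) * p)) 2,
      ← Real.rpow_mul (by norm_num : (0:ℝ) ≤ 2),
      ← Real.rpow_mul (by norm_num : (0:ℝ) ≤ 2), ← Real.rpow_add two_pos]
    norm_num
  have heq : (2:ℝ) ^ (4 - 10 * p) / 6 * 2 ^ (-(2 * σ) * (j:ℝ))
      = 2 ^ ((2 - 4 * p) * 2 + (-((j:ℝ) + 1) * p) * 2) * (2 ^ (j:ℝ) / 6) := by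
    rw [div_mul_eq_mul_div, ← Real.rpow_add two_pos, mul_div_assoc',
      ← Real.rpow_add two_pos]
    congr 1
    rw [hpdef]; ring_nf
  calc (2:ℝ) ^ (4 - 10 * p) / 6 * 2 ^ (-(2 * σ) * (j:ℝ))
      = ((2:ℝ) ^ (2 - 4 * p) * 2 ^ (-((j:ℝ) + 1) * p)) ^ 2 * (2 ^ (j:ℝ) / 6) := by
        rw [heq, e1]
    _ ≤ ((2:ℝ) ^ (2 - 4 * p) * (1 + b) ^ (-p)) ^ 2 * (2 ^ (j:ℝ) / 6) := by
        apply mul_le_mul_of_nonneg_right _ (by positivity)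
        exact pow_le_pow_left₀ (by positivity)
          (mul_le_mul_of_nonneg_left h1b (by positivity)) 2
    _ = ((2:ℝ) ^ (2 - 4 * p) * (1 + b) ^ (-p)) ^ 2 * (volume (Set.Icc a b)).toReal := by
        rw [hvol]
    _ ≤ ∫ ξ in Set.Icc a b, (TCB.g p ξ) ^ 2 := hset
    _ ≤ ∫ ξ in S, (TCB.g p ξ) ^ 2 := hmono
end
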